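/- arXiv:1705.00646 — 4 statements merged into one kernel-verified Lean document; each statement's English description precedes it below -/
import Mathlib

section
/- For every K > 0, C_D0 > 0 and every flight path angle γ ∈ (−π/2, π/2), the quadratic C_D0·R² − sin γ·R − 3K·cos²γ has exactly one positive root, namely R_γ = (sin γ + √(sin²γ + 12·K·C_D0·cos²γ)) / (2·C_D0) (the other root is negative), and the function φ(R) = C_D0·√R + K·cos²γ·R^{−3/2} + sin γ·R^{−1/2} on (0, ∞) attains its global minimum at the unique point R = R_γ. -/
/-!
With `t = √R`, `φ` becomes `ψ t = C t + A t⁻³ + s t⁻¹` (`A = K cos²γ`, `s = sin γ`), and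
`t⁴ ψ'(t) = C t⁴ - s t² - 3A = q(t²)`. Instead of a monotonicity argument we use the exact
identity `ψ t - ψ u = (t - u)² u² G / (3 t³ u³)`, valid when `q(u²) = 0`, where
`G = C u (3t² + 2tu + u²) - s (2t + u)` is positive because `q(u²) = 0` forces `s ≤ C u²`.
-/

open Real

lemma discrim_pos_of_mul_neg {a b c : ℝ} (hac : a * c < 0) : 0 < discrim a b c := by
  unfold discrim
  nlinarith [sq_nonneg b]

lemma abs_lt_sqrt_discrim_of_mul_neg {a b c : ℝ} (hac : a * c < 0) : |b| < √(discrim a b c) := by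
  rw [← sqrt_sq_eq_abs]
  exact sqrt_lt_sqrt (sq_nonneg b) (by unfold discrim; linarith)

lemma quadratic_root_add_pos {a b c : ℝ} (ha : 0 < a) (hc : c < 0) :
    0 < (-b + √(discrim a b c)) / (2 * a) := by
  have := abs_lt_sqrt_discrim_of_mul_neg (b := b) (mul_neg_of_pos_of_neg ha hc)
  have := le_abs_self b
  exact div_pos (by linarith) (by linarith)

lemma quadratic_root_sub_neg {a b c : ℝ} (ha : 0 < a) (hc : c < 0) :
    (-b - √(discrim a b c)) / (2 * a) < 0 := by
  have := abs_lt_sqrt_discrim_of_mul_neg (b := b) (mul_neg_of_pos_of_neg ha hc)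
  have := neg_abs_le b
  exact div_neg_of_neg_of_pos (by linarith) (by linarith)

lemma quadratic_eq_zero_iff_of_mul_neg {a b c : ℝ} (ha : a ≠ 0) (hac : a * c < 0) (x : ℝ) :
    a * (x * x) + b * x + c = 0 ↔
      x = (-b + √(discrim a b c)) / (2 * a) ∨ x = (-b - √(discrim a b c)) / (2 * a) :=
  quadratic_eq_zero_iff ha (mul_self_sqrt (discrim_pos_of_mul_neg hac).le).symm x

lemma rpow_neg_half_eq_inv_sqrt {x : ℝ} (hx : 0 ≤ x) : x ^ (-(1 / 2) : ℝ) = (√x)⁻¹ := by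
  rw [rpow_neg hx, sqrt_eq_rpow]

lemma rpow_neg_three_halves_eq_inv_sqrt_pow {x : ℝ} (hx : 0 ≤ x) :
    x ^ (-(3 / 2) : ℝ) = (√x ^ 3)⁻¹ := by
  rw [rpow_neg hx, sqrt_eq_rpow, ← rpow_natCast, ← rpow_mul hx]
  norm_num

lemma strictMin_at_quartic_root {C A s u t : ℝ} (hC : 0 < C) (hA : 0 ≤ A) (hu : 0 < u)
    (ht : 0 < t) (htu : t ≠ u) (hroot : C * u ^ 4 - s * u ^ 2 - 3 * A = 0) :
    C * u + A * (u ^ 3)⁻¹ + s * u⁻¹ < C * t + A * (t ^ 3)⁻¹ + s * t⁻¹ := by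
  have hs : s ≤ C * u ^ 2 := le_of_mul_le_mul_right (by linarith) (pow_pos hu 2)
  have hG : 0 < C * u * (3 * t ^ 2 + 2 * t * u + u ^ 2) - s * (2 * t + u) := by
    nlinarith [mul_le_mul_of_nonneg_right hs (by positivity : (0 : ℝ) ≤ 2 * t + u),
      mul_pos (mul_pos hC hu) (mul_pos ht ht)]
  have hdiff : C * t + A * (t ^ 3)⁻¹ + s * t⁻¹ - (C * u + A * (u ^ 3)⁻¹ + s * u⁻¹) =
      (t - u) ^ 2 * u ^ 2 * (C * u * (3 * t ^ 2 + 2 * t * u + u ^ 2) - s * (2 * t + u)) /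
        (3 * t ^ 3 * u ^ 3) := by
    field_simp
    -- eliminate `A` via `3A = C u⁴ - s u²`
    linear_combination (t ^ 3 - u ^ 3) * hroot
  have hsq : 0 < (t - u) ^ 2 := pow_two_pos_of_ne_zero (sub_ne_zero.mpr htu)
  rw [← sub_pos, hdiff]
  exact div_pos (mul_pos (mul_pos hsq (by positivity)) hG) (by positivity)

/-- For `K > 0`, `C_D0 > 0` and `γ ∈ (−π/2, π/2)`, the quadratic
`C_D0·R² − sin γ·R − 3K·cos²γ` has exactly one positive root, namely
`R_γ = (sin γ + √(sin²γ + 12·K·C_D0·cos²γ))/(2·C_D0)` (any other root is negative),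
and `φ(R) = C_D0·√R + K·cos²γ·R^{−3/2} + sin γ·R^{−1/2}` on `(0, ∞)` attains its global
minimum at the unique point `R = R_γ`. -/
theorem stmt4 (K CD0 γ : ℝ) (hK : 0 < K) (hCD0 : 0 < CD0)
    (hγ : γ ∈ Set.Ioo (-(π/2)) (π/2)) :
    let q : ℝ → ℝ := fun R => CD0 * R^2 - sin γ * R - 3 * K * (cos γ)^2
    let Rγ : ℝ := (sin γ + Real.sqrt ((sin γ)^2 + 12 * K * CD0 * (cos γ)^2)) / (2 * CD0)
    let φ : ℝ → ℝ := fun R =>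
      CD0 * Real.sqrt R + K * (cos γ)^2 * R ^ (-(3/2) : ℝ) + sin γ * R ^ (-(1/2) : ℝ)
    (0 < Rγ ∧ q Rγ = 0 ∧ (∀ R : ℝ, q R = 0 → R = Rγ ∨ R < 0)) ∧
    (∀ R ∈ Set.Ioi (0:ℝ), R ≠ Rγ → φ Rγ < φ R) := by
  intro q Rγ φ
  have hc : -(3 * K * cos γ ^ 2) < 0 := by
    have := cos_pos_of_mem_Ioo hγ
    simp only [neg_lt_zero]; positivity
  have hq (R : ℝ) : q R = CD0 * (R * R) + -sin γ * R + -(3 * K * cos γ ^ 2) := by ring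
  have hRγ : Rγ = (-(-sin γ) + √(discrim CD0 (-sin γ) (-(3 * K * cos γ ^ 2)))) / (2 * CD0) := by
    have hdisc : discrim CD0 (-sin γ) (-(3 * K * cos γ ^ 2)) =
        sin γ ^ 2 + 12 * K * CD0 * cos γ ^ 2 := by
      unfold discrim; ring
    rw [hdisc, neg_neg]
  have hroots :=
    quadratic_eq_zero_iff_of_mul_neg (b := -sin γ) hCD0.ne' (mul_neg_of_pos_of_neg hCD0 hc)
  have hRγpos : 0 < Rγ := hRγ ▸ quadratic_root_add_pos hCD0 hc
  have hqRγ : q Rγ = 0 := by rw [hq, hroots]; exact .inl hRγ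
  refine ⟨⟨hRγpos, hqRγ, fun R hR => ?_⟩, fun R hR hne => ?_⟩
  · rw [hq, hroots, ← hRγ] at hR
    exact hR.imp_right fun h => h.trans_lt (quadratic_root_sub_neg hCD0 hc)
  · have hφ (x : ℝ) (hx : 0 ≤ x) :
        φ x = CD0 * √x + K * cos γ ^ 2 * (√x ^ 3)⁻¹ + sin γ * (√x)⁻¹ := by
      simp only [φ, rpow_neg_half_eq_inv_sqrt hx, rpow_neg_three_halves_eq_inv_sqrt_pow hx]
    rw [hφ R (le_of_lt hR), hφ Rγ hRγpos.le]
    refine strictMin_at_quartic_root hCD0 (by positivity) (sqrt_pos.mpr hRγpos) (sqrt_pos.mpr hR)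
      (fun h => hne ((sqrt_inj (le_of_lt hR) hRγpos.le).mp h)) ?_
    rw [show √Rγ ^ 4 = (√Rγ ^ 2) ^ 2 by ring, sq_sqrt hRγpos.le]
    linear_combination hqRγ
end

section
/- Let K > 0 and C_D0 > 0 satisfy 12·K·C_D0 < 1, and let γ ∈ (−π/2, π/2). Setting t = τ(γ) = C_D0·R_γ + K·cos²γ/R_γ + sin γ with R_γ = (sin γ + √(sin²γ + 12·K·C_D0·cos²γ))/(2·C_D0), one has sin γ = (2t − √(t²·(1 − 12·K·C_D0) + 64·K²·C_D0² + 16·K·C_D0)) / (2·(1 + 4·K·C_D0)). -/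
open Real

/-! Write `s = sin γ`, `c = cos γ`, `k = K·C_D0` and `D = √(s² + 12k c²)`. At the optimal
ratio `R = (s + D)/(2 C_D0)` one has `C_D0·R = (s + D)/2` and, since `(D - s)(D + s) = 12k c²`,
`K c²/R = (D - s)/6`; hence `t = (4s + 2D)/3`. Squaring `2D = 3t - 4s` and using `c² = 1 - s²`
gives a quadratic in `s` whose discriminant is the perfect square `(2t - 2(1 + 4k)s)²`, and
`12k < 1` makes `s` its smaller root. -/

theorem thrustRatio_at_rangeOptimal_eq {K CD0 s c D : ℝ} (hCD0 : CD0 ≠ 0)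
    (hDsq : D ^ 2 = s ^ 2 + 12 * K * CD0 * c ^ 2) (hsD : s + D ≠ 0) :
    CD0 * ((s + D) / (2 * CD0)) + K * c ^ 2 / ((s + D) / (2 * CD0)) + s = (4 * s + 2 * D) / 3 := by
  field_simp
  linear_combination -hDsq

theorem eq_smallerRoot_of_thrustRatio_eq {k s c D t : ℝ} (hk : 0 ≤ k) (hk12 : 12 * k < 1)
    (hsc : s ^ 2 + c ^ 2 = 1) (hD : 0 ≤ D) (hDsq : D ^ 2 = s ^ 2 + 12 * k * c ^ 2)
    (ht : t = (4 * s + 2 * D) / 3) :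
    s = (2 * t - √(t ^ 2 * (1 - 12 * k) + 64 * k ^ 2 + 16 * k)) / (2 * (1 + 4 * k)) := by
  have habs : |s| ≤ D := abs_le_of_sq_le_sq (by nlinarith [sq_nonneg c]) hD
  have hroot : 0 ≤ 2 * t - 2 * (1 + 4 * k) * s := by
    subst ht
    nlinarith [le_abs_self s, neg_abs_le s, abs_nonneg s]
  have hdisc : t ^ 2 * (1 - 12 * k) + 64 * k ^ 2 + 16 * k = (2 * t - 2 * (1 + 4 * k) * s) ^ 2 := by
    subst ht
    linear_combination (-4 * (1 + 4 * k) / 3) * hDsq + (-16 * k * (1 + 4 * k)) * hsc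
  rw [hdisc, sqrt_sq hroot]
  field_simp
  ring

/-- Let `K > 0`, `C_D0 > 0` with `12·K·C_D0 < 1`, and `γ ∈ (−π/2, π/2)`. With
`t = τ(γ) = C_D0·R_γ + K·cos²γ/R_γ + sin γ` where
`R_γ = (sin γ + √(sin²γ + 12·K·C_D0·cos²γ))/(2·C_D0)`, one has
`sin γ = (2t − √(t²·(1 − 12·K·C_D0) + 64·K²·C_D0² + 16·K·C_D0))/(2·(1 + 4·K·C_D0))`. -/
theorem stmt7 (K CD0 γ : ℝ) (hK : 0 < K) (hCD0 : 0 < CD0)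
    (h12 : 12 * K * CD0 < 1) (hγ : γ ∈ Set.Ioo (-(π/2)) (π/2)) :
    let Rγ : ℝ := (sin γ + Real.sqrt ((sin γ)^2 + 12 * K * CD0 * (cos γ)^2)) / (2 * CD0)
    let t : ℝ := CD0 * Rγ + K * (cos γ)^2 / Rγ + sin γ
    sin γ = (2 * t - Real.sqrt (t^2 * (1 - 12 * K * CD0) + 64 * K^2 * CD0^2 + 16 * K * CD0))
      / (2 * (1 + 4 * K * CD0)) := by
  intro Rγ t
  set D := √(sin γ ^ 2 + 12 * K * CD0 * cos γ ^ 2)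
  have hc : 0 < cos γ := cos_pos_of_mem_Ioo hγ
  have hDsq : D ^ 2 = sin γ ^ 2 + 12 * K * CD0 * cos γ ^ 2 := sq_sqrt (by positivity)
  have hsD : 0 < sin γ + D := by
    have hdrag : 0 < 12 * K * CD0 * cos γ ^ 2 := by positivity
    have habs : |sin γ| < D := abs_lt_of_sq_lt_sq (by linarith) (sqrt_nonneg _)
    linarith [neg_abs_le (sin γ)]
  have ht : t = (4 * sin γ + 2 * D) / 3 := thrustRatio_at_rangeOptimal_eq hCD0.ne' hDsq hsD.ne'
  convert eq_smallerRoot_of_thrustRatio_eq (mul_pos hK hCD0).le (by linarith)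
    (sin_sq_add_cos_sq γ) (sqrt_nonneg _) (by rw [hDsq]; ring) ht using 4 <;> ring
end

section
/- Let K > 0 and C_D0 > 0 satisfy 12·K·C_D0 ≤ 1, and let γ ∈ (−π/2, π/2). If R = R_γ = (sin γ + √(sin²γ + 12·K·C_D0·cos²γ))/(2·C_D0), then R² + 36·K² − 12·K·C_D0·R² ≥ 0 and 6·K·sin γ = R − √(R² + 36·K² − 12·K·C_D0·R²). -/
open Real

/-! At `R = R_γ` the defining square root clears to the quadratic `C_D0·R² − R·sin γ = 3K·cos²γ`.
Eliminating `C_D0·R²` with it and using `cos²γ = 1 − sin²γ` turns `R² + 36K² − 12K·C_D0·R²` into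
the perfect square `(R − 6K·sin γ)²`, and `12K·C_D0 ≤ 1` makes `R − 6K·sin γ` nonnegative. -/

/-- `R_γ`, with `s = sin γ` and `c = cos γ`. -/
noncomputable def rangeOptimalRatio (K CD0 s c : ℝ) : ℝ :=
  (s + √(s ^ 2 + 12 * K * CD0 * c ^ 2)) / (2 * CD0)

section

variable {K CD0 s c : ℝ}

lemma abs_le_sqrt_sq_add_mul_sq (hKC : 0 ≤ K * CD0) : |s| ≤ √(s ^ 2 + 12 * K * CD0 * c ^ 2) := by
  rw [← sqrt_sq_eq_abs]
  gcongr
  nlinarith [mul_nonneg hKC (sq_nonneg c)]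

lemma rangeOptimalRatio_quadratic (hK : 0 ≤ K) (hCD0 : 0 < CD0) :
    CD0 * rangeOptimalRatio K CD0 s c ^ 2 - s * rangeOptimalRatio K CD0 s c = 3 * K * c ^ 2 := by
  have hD : √(s ^ 2 + 12 * K * CD0 * c ^ 2) ^ 2 = s ^ 2 + 12 * K * CD0 * c ^ 2 :=
    sq_sqrt (by positivity)
  unfold rangeOptimalRatio
  generalize √(s ^ 2 + 12 * K * CD0 * c ^ 2) = D at hD ⊢
  field_simp
  linear_combination hD

lemma six_mul_le_rangeOptimalRatio (hK : 0 ≤ K) (hCD0 : 0 < CD0) (h12 : 12 * K * CD0 ≤ 1) :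
    6 * K * s ≤ rangeOptimalRatio K CD0 s c := by
  have hKC : 0 ≤ K * CD0 := mul_nonneg hK hCD0.le
  have hD := abs_le_sqrt_sq_add_mul_sq (s := s) (c := c) hKC
  unfold rangeOptimalRatio
  rw [le_div_iff₀ (by positivity)]
  rcases le_total 0 s with hs | hs
  · nlinarith [le_abs_self s, mul_nonneg hKC hs]
  · nlinarith [neg_abs_le s, mul_nonneg hKC (neg_nonneg.2 hs)]

lemma add_sub_mul_sq_eq_sq_of_quadratic {R : ℝ} (hsc : s ^ 2 + c ^ 2 = 1)
    (hR : CD0 * R ^ 2 - s * R = 3 * K * c ^ 2) :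
    R ^ 2 + 36 * K ^ 2 - 12 * K * CD0 * R ^ 2 = (R - 6 * K * s) ^ 2 := by
  linear_combination (-12 * K) * hR - 36 * K ^ 2 * hsc

end

theorem stmt8_general (K CD0 γ : ℝ) (hK : 0 < K) (hCD0 : 0 < CD0)
    (h12 : 12 * K * CD0 ≤ 1) :
    let R : ℝ := (sin γ + Real.sqrt ((sin γ)^2 + 12 * K * CD0 * (cos γ)^2)) / (2 * CD0)
    0 ≤ R^2 + 36 * K^2 - 12 * K * CD0 * R^2 ∧
    6 * K * sin γ = R - Real.sqrt (R^2 + 36 * K^2 - 12 * K * CD0 * R^2) := by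
  intro R
  have hsquare : R ^ 2 + 36 * K ^ 2 - 12 * K * CD0 * R ^ 2 = (R - 6 * K * sin γ) ^ 2 :=
    add_sub_mul_sq_eq_sq_of_quadratic (sin_sq_add_cos_sq γ) (rangeOptimalRatio_quadratic hK.le hCD0)
  have hle : 6 * K * sin γ ≤ R := six_mul_le_rangeOptimalRatio hK.le hCD0 h12
  rw [hsquare, sqrt_sq (sub_nonneg.2 hle)]
  exact ⟨sq_nonneg _, by ring⟩

/-- Let `K > 0`, `C_D0 > 0` with `12·K·C_D0 ≤ 1`, and `γ ∈ (−π/2, π/2)`. If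
`R = R_γ = (sin γ + √(sin²γ + 12·K·C_D0·cos²γ))/(2·C_D0)`, then
`R² + 36·K² − 12·K·C_D0·R² ≥ 0` and `6·K·sin γ = R − √(R² + 36·K² − 12·K·C_D0·R²)`. -/
theorem stmt8 (K CD0 γ : ℝ) (hK : 0 < K) (hCD0 : 0 < CD0)
    (h12 : 12 * K * CD0 ≤ 1) (hγ : γ ∈ Set.Ioo (-(π/2)) (π/2)) :
    let R : ℝ := (sin γ + Real.sqrt ((sin γ)^2 + 12 * K * CD0 * (cos γ)^2)) / (2 * CD0)
    0 ≤ R^2 + 36 * K^2 - 12 * K * CD0 * R^2 ∧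
    6 * K * sin γ = R - Real.sqrt (R^2 + 36 * K^2 - 12 * K * CD0 * R^2) :=
  stmt8_general K CD0 γ hK hCD0 h12
end

section
/- Let K > 0 and C_D0 > 0. For γ ∈ (0, π/2] define R_γ = (sin γ + √(sin²γ + 12·K·C_D0·cos²γ))/(2·C_D0), τ(γ) = C_D0·R_γ + K·cos²γ/R_γ + sin γ, and ψ(γ) = τ(γ)^{3/2} / ( sin γ · √(R_γ) ). Then ψ is continuous and positive on (0, π/2], ψ(γ) → +∞ as γ → 0⁺, ψ(π/2) = 2·√2·√(C_D0), and consequently for every c ≥ 2·√2·√(C_D0) there exists γ ∈ (0, π/2] with ψ(γ) = c. -/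
/-!
For `γ ∈ (0, π/2]` we have `sin γ > 0`, which makes `R_γ` and `τ(γ)` positive, so `ψ` is a
quotient of continuous positive functions. As `γ → 0⁺`, `R_γ` and `τ(γ)` tend to the positive
values they take at `γ = 0`, hence `ψ(γ) ~ const / sin γ → +∞`. At `γ = π/2` one finds
`R = 1/C_D0` and `τ = 2`, and the intermediate value theorem on `(0, π/2]` gives every
value above `ψ(π/2)`.
-/

open Real Filter Set Topology

theorem ContinuousOn.Ici_subset_image_Ioc_of_tendsto_atTop {α δ : Type*}
    [ConditionallyCompleteLinearOrder α] [TopologicalSpace α] [OrderTopology α] [DenselyOrdered α]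
    [LinearOrder δ] [TopologicalSpace δ] [OrderClosedTopology δ] {a b : α} {f : α → δ}
    (hf : ContinuousOn f (Ioc a b)) (hab : a < b) (ht : Tendsto f (𝓝[>] a) atTop) :
    Ici (f b) ⊆ f '' Ioc a b :=
  haveI := nhdsGT_neBot_of_exists_gt ⟨b, hab⟩
  isPreconnected_Ioc.intermediate_value_Ici (right_mem_Ioc.2 hab)
    (le_principal_iff.2 (Ioc_mem_nhdsGT hab)) hf ht

theorem Real.tendsto_sin_nhdsGT_zero : Tendsto sin (𝓝[>] 0) (𝓝[>] 0) := by
  apply tendsto_nhdsWithin_of_tendsto_nhds_of_eventually_within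
  · simpa using continuous_sin.continuousWithinAt.tendsto (x := 0) (s := Ioi 0)
  · filter_upwards [Ioo_mem_nhdsGT pi_pos] with x hx
    exact sin_pos_of_pos_of_lt_pi hx.1 hx.2

namespace RangeOptimalClimb

variable (K CD0 : ℝ)

-- The paper's `R_γ`, `τ(γ)` and `ψ(γ)`.
noncomputable def pressureRatio (γ : ℝ) : ℝ :=
  (sin γ + √((sin γ) ^ 2 + 12 * K * CD0 * (cos γ) ^ 2)) / (2 * CD0)

noncomputable def thrustRatio (γ : ℝ) : ℝ :=
  CD0 * pressureRatio K CD0 γ + K * (cos γ) ^ 2 / pressureRatio K CD0 γ + sin γ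

noncomputable def climbIndex (γ : ℝ) : ℝ :=
  thrustRatio K CD0 γ ^ ((3 : ℝ) / 2) / (sin γ * √(pressureRatio K CD0 γ))

variable {K CD0}

theorem continuous_pressureRatio : Continuous (pressureRatio K CD0) := by
  unfold pressureRatio
  fun_prop

theorem pressureRatio_pos (hCD0 : 0 < CD0) {γ : ℝ} (hγ : 0 < sin γ) :
    0 < pressureRatio K CD0 γ := by
  unfold pressureRatio
  positivity

theorem pressureRatio_zero : pressureRatio K CD0 0 = √(12 * K * CD0) / (2 * CD0) := by
  simp [pressureRatio]

theorem pressureRatio_pi_div_two (hCD0 : CD0 ≠ 0) : pressureRatio K CD0 (π / 2) = CD0⁻¹ := by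
  rw [pressureRatio, sin_pi_div_two, cos_pi_div_two]
  field_simp
  norm_num

theorem continuousAt_thrustRatio {γ : ℝ} (hγ : pressureRatio K CD0 γ ≠ 0) :
    ContinuousAt (thrustRatio K CD0) γ := by
  have := continuous_pressureRatio (K := K) (CD0 := CD0)
  unfold thrustRatio
  fun_prop (disch := assumption)

theorem thrustRatio_pos (hK : 0 ≤ K) (hCD0 : 0 < CD0) {γ : ℝ} (hR : 0 < pressureRatio K CD0 γ)
    (hγ : 0 ≤ sin γ) : 0 < thrustRatio K CD0 γ := by
  unfold thrustRatio
  positivity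

theorem thrustRatio_pi_div_two (hCD0 : CD0 ≠ 0) : thrustRatio K CD0 (π / 2) = 2 := by
  rw [thrustRatio, pressureRatio_pi_div_two hCD0, cos_pi_div_two, sin_pi_div_two,
    mul_inv_cancel₀ hCD0]
  ring

theorem climbIndex_pos (hK : 0 ≤ K) (hCD0 : 0 < CD0) {γ : ℝ} (hγ : 0 < sin γ) :
    0 < climbIndex K CD0 γ := by
  have hR := pressureRatio_pos (K := K) hCD0 hγ
  have hτ := thrustRatio_pos hK hCD0 hR hγ.le
  unfold climbIndex
  positivity

theorem continuousAt_climbIndex (hCD0 : 0 < CD0) {γ : ℝ} (hγ : 0 < sin γ) :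
    ContinuousAt (climbIndex K CD0) γ := by
  have hR := pressureRatio_pos (K := K) hCD0 hγ
  have hτ := continuousAt_thrustRatio hR.ne'
  have := continuous_pressureRatio (K := K) (CD0 := CD0)
  unfold climbIndex
  fun_prop (disch := positivity)

theorem tendsto_climbIndex_nhdsGT_zero (hK : 0 < K) (hCD0 : 0 < CD0) :
    Tendsto (climbIndex K CD0) (𝓝[>] 0) atTop := by
  set F : ℝ → ℝ := fun γ => thrustRatio K CD0 γ ^ ((3 : ℝ) / 2) / √(pressureRatio K CD0 γ)
  have hR : 0 < pressureRatio K CD0 0 := by rw [pressureRatio_zero]; positivity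
  have hτ : 0 < thrustRatio K CD0 0 := thrustRatio_pos hK.le hCD0 hR sin_zero.ge
  have hF : ContinuousAt F 0 := by
    have := continuousAt_thrustRatio hR.ne'
    have := continuous_pressureRatio (K := K) (CD0 := CD0)
    fun_prop (disch := positivity)
  have hF0 : 0 < F 0 := by positivity
  refine (hF.tendsto.mono_left nhdsWithin_le_nhds).pos_mul_atTop hF0
    tendsto_sin_nhdsGT_zero.inv_tendsto_nhdsGT_zero |>.congr fun γ => ?_
  simp only [F, climbIndex, Pi.inv_apply]
  ring

theorem climbIndex_pi_div_two (hCD0 : CD0 ≠ 0) :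
    climbIndex K CD0 (π / 2) = 2 * √2 * √CD0 := by
  have h : (2 : ℝ) ^ ((3 : ℝ) / 2) = 2 * √2 := by
    rw [show (3 : ℝ) / 2 = 1 + 1 / 2 by norm_num, rpow_add two_pos, rpow_one, ← sqrt_eq_rpow]
  rw [climbIndex, thrustRatio_pi_div_two hCD0, pressureRatio_pi_div_two hCD0, sin_pi_div_two,
    one_mul, sqrt_inv, div_inv_eq_mul, h]

end RangeOptimalClimb

open RangeOptimalClimb in
/-- For `K > 0`, `C_D0 > 0`, with `R_γ` the range-optimal pressure ratio, `τ(γ)` the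
corresponding thrust-to-weight ratio and `ψ(γ) = τ(γ)^{3/2}/(sin γ·√(R_γ))`, the function
`ψ` is continuous and positive on `(0, π/2]`, tends to `+∞` as `γ → 0⁺`, satisfies
`ψ(π/2) = 2·√2·√(C_D0)`, and attains every value `c ≥ 2·√2·√(C_D0)` on `(0, π/2]`. -/
theorem stmt14 (K CD0 : ℝ) (hK : 0 < K) (hCD0 : 0 < CD0) :
    let R : ℝ → ℝ := fun γ =>
      (sin γ + Real.sqrt ((sin γ)^2 + 12 * K * CD0 * (cos γ)^2)) / (2 * CD0)
    let τ : ℝ → ℝ := fun γ => CD0 * R γ + K * (cos γ)^2 / R γ + sin γ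
    let ψ : ℝ → ℝ := fun γ => (τ γ) ^ ((3:ℝ)/2) / (sin γ * Real.sqrt (R γ))
    ContinuousOn ψ (Set.Ioc 0 (π/2)) ∧
    (∀ γ ∈ Set.Ioc 0 (π/2), 0 < ψ γ) ∧
    Filter.Tendsto ψ (nhdsWithin 0 (Set.Ioi 0)) Filter.atTop ∧
    ψ (π/2) = 2 * Real.sqrt 2 * Real.sqrt CD0 ∧
    (∀ c : ℝ, 2 * Real.sqrt 2 * Real.sqrt CD0 ≤ c → ∃ γ ∈ Set.Ioc 0 (π/2), ψ γ = c) := by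
  have hsin (γ : ℝ) (hγ : γ ∈ Ioc 0 (π / 2)) : 0 < sin γ :=
    sin_pos_of_pos_of_lt_pi hγ.1 (hγ.2.trans_lt (half_lt_self pi_pos))
  have hcont : ContinuousOn (climbIndex K CD0) (Ioc 0 (π / 2)) := fun γ hγ =>
    (continuousAt_climbIndex hCD0 (hsin γ hγ)).continuousWithinAt
  have hlim := tendsto_climbIndex_nhdsGT_zero hK hCD0
  have hend := climbIndex_pi_div_two (K := K) hCD0.ne'
  refine ⟨hcont, fun γ hγ => climbIndex_pos hK.le hCD0 (hsin γ hγ), hlim, hend, fun c hc => ?_⟩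
  exact hcont.Ici_subset_image_Ioc_of_tendsto_atTop (half_pos pi_pos) hlim (hend ▸ hc)
end
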